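/- arXiv:2101.05713 — 5 statements merged into one kernel-verified Lean document; each statement's English description precedes it below -/
import Mathlib

section
/- For all integers m ≥ 1, r ≥ 0, k ≥ 0, and n ≥ 1, the power sum S_k^{m,r}(n) = Σ_{ℓ=0}^{n-1} (ℓm + r)^k satisfies, as an identity of rational numbers, S_k^{m,r}(n) = Σ_{t=1}^{k+1} c_{k,t}^{m,r} n^t, where c_{k,t}^{m,r} = (m^k/(k+1)) · C(k+1, t) · Σ_{j=0}^{k+1-t} Σ_{i=0}^{j} ((-1)^i/(j+1)) · C(j, i) · (i + r/m)^{k+1-t}. -/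
/-!
With `q = r / m` the sum is `m ^ k * ∑ ℓ < n, (q + ℓ) ^ k`. The inner double sum of the formula is
the Bernoulli polynomial `B_s(q)`, `s = k + 1 - t`, written as `(log (1 + Δ) / Δ) x ^ s` with `Δ`
the forward difference. As `log (1 + Δ)` is differentiation on
polynomials, `Δ B_{k+1} = (k + 1) x ^ k`, so the power sum telescopes to
`(B_{k+1}(q + n) - B_{k+1}(q)) / (k + 1)`. Since `Δ` commutes with translations, the binomial
theorem gives the Appell property `B_s(x + y) = ∑ C(s, t) y ^ t B_{s-t}(x)`, which expands this in
powers of `n`.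
-/

open Finset Function fwdDiff

section AddCommGroup

variable {M G : Type*} [AddCommMonoid M] [AddCommGroup G] (h : M)

lemma fwdDiff_iter_succ_apply (f : M → G) (n : ℕ) (x : M) :
    Δ_[h] ^[n + 1] f x = Δ_[h] ^[n] f (x + h) - Δ_[h] ^[n] f x := by
  rw [iterate_succ_apply']
  rfl

lemma sum_range_neg_one_pow_smul_fwdDiff_iter_add (f : M → G) (x : M) (N : ℕ) :
    ∑ j ∈ range N, (-1 : ℤ) ^ j • Δ_[h] ^[j] f (x + h) = f x - (-1 : ℤ) ^ N • Δ_[h] ^[N] f x := by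
  induction N with
  | zero => simp
  | succ N ih =>
    rw [sum_range_succ, ih, fwdDiff_iter_succ_apply, pow_succ, mul_neg_one, neg_smul, smul_sub]
    abel

end AddCommGroup

section CommRing

variable {R : Type*} [CommRing R]

lemma fwdDiff_iter_succ_id_mul (f : R → R) (n : ℕ) (x : R) :
    Δ_[1] ^[n + 1] (fun y ↦ y * f y) x =
      x * Δ_[1] ^[n + 1] f x + (n + 1) * Δ_[1] ^[n] f (x + 1) := by
  induction n generalizing x with
  | zero =>
    simp only [fwdDiff_iter_succ_apply, iterate_zero, id_eq]
    push_cast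
    ring
  | succ n ih =>
    rw [fwdDiff_iter_succ_apply 1 (fun y ↦ y * f y) (n + 1), ih, ih]
    simp only [fwdDiff_iter_succ_apply]
    push_cast
    ring

lemma fwdDiff_iter_pow_add (j K : ℕ) (x y : R) :
    Δ_[1] ^[j] (· ^ K) (x + y) =
      ∑ t ∈ range (K + 1), K.choose t * y ^ t * Δ_[1] ^[j] (· ^ (K - t)) x := by
  have hbinom : (fun z ↦ (z + y) ^ K) =
      ∑ t ∈ range (K + 1), (K.choose t * y ^ t) • fun z : R ↦ z ^ (K - t) := by
    ext z
    rw [add_comm z y, add_pow, Finset.sum_apply]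
    refine sum_congr rfl fun t _ ↦ ?_
    simp only [Pi.smul_apply, smul_eq_mul]
    ring
  rw [← fwdDiff_iter_comp_add, hbinom, fwdDiff_iter_finsetSum, Finset.sum_apply]
  simp only [fwdDiff_iter_const_smul, Pi.smul_apply, smul_eq_mul]

end CommRing

section Field

variable {K : Type*} [Field K]

/-- The Bernoulli polynomial `B_s(x)` in the explicit form `B_s = (log (1 + Δ) / Δ) x ^ s`. -/
def bernoulliFwdDiff (s : ℕ) (x : K) : K :=
  ∑ j ∈ range (s + 1), (-1) ^ j / (j + 1) * Δ_[1] ^[j] (· ^ s) x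

lemma bernoulliFwdDiff_eq_sum_range {s N : ℕ} (hs : s < N) (x : K) :
    bernoulliFwdDiff s x = ∑ j ∈ range N, (-1) ^ j / (j + 1) * Δ_[1] ^[j] (· ^ s) x := by
  refine sum_subset (range_subset_range.mpr hs) fun j _ hj ↦ ?_
  rw [fwdDiff_iter_pow_eq_zero_of_lt (by simpa using hj), Pi.zero_apply, mul_zero]

lemma bernoulliFwdDiff_eq_sum_sum (s : ℕ) (x : K) :
    bernoulliFwdDiff s x = ∑ j ∈ range (s + 1), ∑ i ∈ range (j + 1),
      (-1) ^ i / (j + 1) * j.choose i * (i + x) ^ s := by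
  refine sum_congr rfl fun j _ ↦ ?_
  rw [fwdDiff_iter_eq_sum_shift, mul_sum]
  refine sum_congr rfl fun i hi ↦ ?_
  obtain ⟨d, rfl⟩ := Nat.exists_eq_add_of_le (Nat.lt_succ_iff.mp (mem_range.mp hi))
  have hsign : (-1 : K) ^ d * (-1) ^ d = 1 := by rw [← mul_pow]; norm_num
  simp only [Nat.add_sub_cancel_left, nsmul_eq_mul, mul_one, zsmul_eq_mul, Int.cast_mul,
    Int.cast_pow, Int.cast_neg, Int.cast_one, Int.cast_natCast, pow_add]
  linear_combination (-1) ^ i / ((i + d : ℕ) + 1 : K) * ((i + d).choose i) * (i + x) ^ s * hsign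

lemma sum_range_fwdDiff_iter_succ_pow_succ_eq_mul_add [CharZero K] {N s : ℕ} (hs : s < N) (x : K) :
    ∑ j ∈ range N, (-1) ^ j / (j + 1) * Δ_[1] ^[j + 1] (· ^ (s + 1)) x =
      x * ∑ j ∈ range N, (-1) ^ j / (j + 1) * Δ_[1] ^[j + 1] (· ^ s) x + x ^ s := by
  have hshift := sum_range_neg_one_pow_smul_fwdDiff_iter_add 1 (· ^ s) x N
  simp only [zsmul_eq_mul, Int.cast_pow, Int.cast_neg, Int.cast_one,
    fwdDiff_iter_pow_eq_zero_of_lt hs, Pi.zero_apply, mul_zero, sub_zero] at hshift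
  have hleibniz (j : ℕ) : (-1) ^ j / (j + 1) * Δ_[1] ^[j + 1] (· ^ (s + 1)) x =
      x * ((-1) ^ j / (j + 1) * Δ_[1] ^[j + 1] (· ^ s) x) +
        (-1) ^ j * Δ_[1] ^[j] (· ^ s) (x + 1) := by
    simp_rw [pow_succ']
    rw [fwdDiff_iter_succ_id_mul]
    field_simp
  rw [sum_congr rfl fun j _ ↦ hleibniz j, sum_add_distrib, ← mul_sum, hshift]

/-- On polynomials, `log (1 + Δ) = Σ (-1) ^ j Δ ^ (j + 1) / (j + 1)` is differentiation. -/
lemma sum_range_fwdDiff_iter_succ_pow_succ [CharZero K] {N s : ℕ} (hs : s < N) (x : K) :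
    ∑ j ∈ range N, (-1) ^ j / (j + 1) * Δ_[1] ^[j + 1] (· ^ (s + 1)) x = (s + 1) * x ^ s := by
  induction s with
  | zero =>
    have hconst (j : ℕ) : Δ_[1] ^[j + 1] (· ^ 0) x = 0 := by
      rw [fwdDiff_iter_pow_eq_zero_of_lt j.succ_pos, Pi.zero_apply]
    rw [sum_range_fwdDiff_iter_succ_pow_succ_eq_mul_add hs]
    simp only [hconst, mul_zero, sum_const_zero]
    simp
  | succ s ih =>
    rw [sum_range_fwdDiff_iter_succ_pow_succ_eq_mul_add hs, ih (by omega)]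
    push_cast
    ring

lemma fwdDiff_bernoulliFwdDiff_succ [CharZero K] (s : ℕ) (x : K) :
    Δ_[1] (bernoulliFwdDiff (s + 1)) x = (s + 1) * x ^ s := by
  rw [← sum_range_fwdDiff_iter_succ_pow_succ (by omega : s < s + 1 + 1) x]
  simp only [fwdDiff, bernoulliFwdDiff, ← sum_sub_distrib, ← mul_sub, fwdDiff_iter_succ_apply]

lemma succ_mul_sum_range_add_pow [CharZero K] (s n : ℕ) (x : K) :
    (s + 1) * ∑ ℓ ∈ range n, (x + ℓ) ^ s =
      bernoulliFwdDiff (s + 1) (x + n) - bernoulliFwdDiff (s + 1) x := by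
  simp_rw [mul_sum, ← fwdDiff_bernoulliFwdDiff_succ, fwdDiff]
  convert sum_range_sub (fun ℓ : ℕ ↦ bernoulliFwdDiff (s + 1) (x + ℓ)) n using 2 with ℓ
  · push_cast; ring_nf
  · simp

lemma bernoulliFwdDiff_add (s : ℕ) (x y : K) :
    bernoulliFwdDiff s (x + y) =
      ∑ t ∈ range (s + 1), s.choose t * y ^ t * bernoulliFwdDiff (s - t) x := by
  simp_rw [bernoulliFwdDiff_eq_sum_range (Nat.lt_succ_of_le (Nat.sub_le s _)), mul_sum,
    bernoulliFwdDiff, fwdDiff_iter_pow_add, mul_sum]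
  rw [sum_comm]
  refine sum_congr rfl fun j _ ↦ sum_congr rfl fun t _ ↦ ?_
  ring

lemma bernoulliFwdDiff_add_sub (s : ℕ) (x y : K) :
    bernoulliFwdDiff s (x + y) - bernoulliFwdDiff s x =
      ∑ t ∈ Icc 1 s, s.choose t * y ^ t * bernoulliFwdDiff (s - t) x := by
  rw [bernoulliFwdDiff_add, range_eq_Ico, sum_eq_sum_Ico_succ_bot s.succ_pos, zero_add,
    Nat.succ_eq_add_one, Ico_add_one_right_eq_Icc]
  simp

end Field

theorem power_sum_coeff_formula_general (m r k n : ℕ) (hm : 1 ≤ m) :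
    ∑ ℓ ∈ Finset.range n, ((ℓ : ℚ) * m + r) ^ k =
      ∑ t ∈ Finset.Icc 1 (k + 1),
        ((m : ℚ) ^ k / (k + 1) * (Nat.choose (k + 1) t : ℚ) *
          ∑ j ∈ Finset.range (k + 1 - t + 1), ∑ i ∈ Finset.range (j + 1),
            (-1 : ℚ) ^ i / (j + 1) * (Nat.choose j i : ℚ) *
              ((i : ℚ) + (r : ℚ) / m) ^ (k + 1 - t)) * (n : ℚ) ^ t := by
  have hm0 : (m : ℚ) ≠ 0 := Nat.cast_ne_zero.mpr (Nat.one_le_iff_ne_zero.mp hm)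
  have hterm (ℓ : ℕ) : ((ℓ : ℚ) * m + r) ^ k = m ^ k * (r / m + ℓ) ^ k := by
    rw [← mul_pow]
    field_simp
    ring
  set q : ℚ := r / m
  calc ∑ ℓ ∈ range n, ((ℓ : ℚ) * m + r) ^ k
      = m ^ k / (k + 1) * ((k + 1) * ∑ ℓ ∈ range n, (q + ℓ) ^ k) := by
        simp_rw [hterm, ← mul_sum]
        field_simp
    _ = m ^ k / (k + 1) * ∑ t ∈ Icc 1 (k + 1),
          (k + 1).choose t * n ^ t * bernoulliFwdDiff (k + 1 - t) q := by
        rw [succ_mul_sum_range_add_pow, bernoulliFwdDiff_add_sub]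
    _ = _ := by
        rw [mul_sum]
        refine sum_congr rfl fun t _ ↦ ?_
        rw [bernoulliFwdDiff_eq_sum_sum]
        ring

/-- `S_k^{m,r}(n) = Σ_{t=1}^{k+1} c_{k,t}^{m,r} n^t` with
`c_{k,t}^{m,r} = (m^k/(k+1)) C(k+1,t) Σ_{j=0}^{k+1-t} Σ_{i=0}^{j} ((-1)^i/(j+1)) C(j,i) (i + r/m)^{k+1-t}`. -/
theorem power_sum_coeff_formula (m r k n : ℕ) (hm : 1 ≤ m) (hn : 1 ≤ n) :
    ∑ ℓ ∈ Finset.range n, ((ℓ : ℚ) * m + r) ^ k =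
      ∑ t ∈ Finset.Icc 1 (k + 1),
        ((m : ℚ) ^ k / (k + 1) * (Nat.choose (k + 1) t : ℚ) *
          ∑ j ∈ Finset.range (k + 1 - t + 1), ∑ i ∈ Finset.range (j + 1),
            (-1 : ℚ) ^ i / (j + 1) * (Nat.choose j i : ℚ) *
              ((i : ℚ) + (r : ℚ) / m) ^ (k + 1 - t)) * (n : ℚ) ^ t :=
  power_sum_coeff_formula_general m r k n hm
end

section
/- For every integer k ≥ 0 and every rational number x, the k-th Bernoulli polynomial satisfies B_k(x) = Σ_{j=0}^{k} Σ_{i=j}^{k} ((j+1)/(i+1)) · S_1(i+1, j+1) · S_2(k, i) · x^j, where S_1 are the signed Stirling numbers of the first kind and S_2 are the Stirling numbers of the second kind. -/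
/-!
The explicit formula says `S_2(k, i) = Δ^i (x ↦ x^k)(0) / i!`, so the Gregory–Newton formula gives
`x^k = Σ_i S_2(k, i) (x)_i` at every natural `x`. Since `Δ (x)_{i+1} = (i+1) (x)_i`, the polynomial
`G = Σ_i S_2(k, i) (x)_{i+1} / (i+1)` satisfies `ΔG = x^k` on `ℕ`, as does `B_{k+1} / (k+1)`.
Their difference is then constant on `ℕ`, hence a constant polynomial, so `B_k = G'`; expanding
`(x)_{i+1}` in the signed Stirling numbers of the first kind gives the double sum.
-/

/-- The signed Stirling numbers of the first kind, as coefficients of the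
falling factorial `x(x-1)⋯(x-n+1) = Σ_{j=0}^{n} S_1(n,j) x^j`. -/
noncomputable def stirlingFirst (n j : ℕ) : ℚ :=
  (∏ i ∈ Finset.range n, (Polynomial.X - Polynomial.C (i : ℚ))).coeff j

/-- The (unsigned) Stirling numbers of the second kind
`S_2(k,j) = (1/j!) Σ_{i=0}^{j} (-1)^{j-i} C(j,i) i^k`. -/
def stirlingSecond (k j : ℕ) : ℚ :=
  (1 / (Nat.factorial j : ℚ)) *
    ∑ i ∈ Finset.range (j + 1), (-1 : ℚ) ^ (j - i) * (Nat.choose j i : ℚ) * (i : ℚ) ^ k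

open Polynomial Finset

namespace Polynomial

variable {R : Type*} [CommRing R]

theorem eq_of_eval_natCast_eq [IsDomain R] [CharZero R] {p q : R[X]}
    (h : ∀ n : ℕ, p.eval (n : R) = q.eval (n : R)) : p = q :=
  eq_of_infinite_eval_eq p q <| (Set.infinite_range_of_injective Nat.cast_injective).mono <| by
    rintro _ ⟨n, rfl⟩
    exact h n

theorem eq_C_of_eval_natCast_add_one_eq [IsDomain R] [CharZero R] {p : R[X]}
    (h : ∀ n : ℕ, p.eval ((n : R) + 1) = p.eval (n : R)) : p = C (p.eval 0) := by
  refine eq_of_eval_natCast_eq fun n => ?_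
  induction n with
  | zero => simp
  | succ n ih => rw [Nat.cast_succ, h, ih, eval_C, eval_C]

theorem eval_derivative_eq_sum_range {p : R[X]} {n : ℕ} (hp : p.natDegree ≤ n + 1) (x : R) :
    (derivative p).eval x = ∑ j ∈ range (n + 1), ((j : R) + 1) * p.coeff (j + 1) * x ^ j := by
  have hdeg : (derivative p).natDegree < n + 1 :=
    (natDegree_derivative_le p).trans_lt (by omega)
  rw [eval_eq_sum_range' hdeg]
  refine sum_congr rfl fun j _ => ?_
  rw [coeff_derivative]
  ring

theorem descPochhammer_eval_add_one_sub (n : ℕ) (x : R) :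
    (descPochhammer R (n + 1)).eval (x + 1) - (descPochhammer R (n + 1)).eval x =
      ((n : R) + 1) * (descPochhammer R n).eval x := by
  rw [descPochhammer_succ_eval n x, descPochhammer_succ_left, eval_mul, eval_comp]
  simp only [eval_X, eval_sub, eval_one, add_sub_cancel_right]
  ring

end Polynomial

theorem stirlingFirst_eq_coeff_descPochhammer (n j : ℕ) :
    stirlingFirst n j = (descPochhammer ℚ n).coeff j := by
  suffices ∏ i ∈ range n, (X - C (i : ℚ)) = descPochhammer ℚ n by rw [stirlingFirst, this]
  induction n with
  | zero => simp
  | succ n ih => rw [prod_range_succ, ih, descPochhammer_succ_right, C_eq_natCast]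

theorem stirlingSecond_eq_fwdDiff_iter_div_factorial (k i : ℕ) :
    stirlingSecond k i = (fwdDiff 1)^[i] (fun r : ℚ => r ^ k) 0 / i.factorial := by
  rw [stirlingSecond, fwdDiff_iter_eq_sum_shift]
  simp [zsmul_eq_mul, div_eq_inv_mul]

theorem stirlingSecond_eq_zero_of_lt {k i : ℕ} (h : k < i) : stirlingSecond k i = 0 := by
  rw [stirlingSecond_eq_fwdDiff_iter_div_factorial, fwdDiff_iter_pow_eq_zero_of_lt h,
    Pi.zero_apply, zero_div]

theorem natCast_pow_eq_sum_stirlingSecond_mul_descPochhammer (n k : ℕ) :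
    (n : ℚ) ^ k = ∑ i ∈ range (k + 1), stirlingSecond k i * (descPochhammer ℚ i).eval (n : ℚ) := by
  have hterm (i : ℕ) : n.choose i • (fwdDiff 1)^[i] (fun r : ℚ => r ^ k) 0 =
      stirlingSecond k i * (descPochhammer ℚ i).eval (n : ℚ) := by
    rw [stirlingSecond_eq_fwdDiff_iter_div_factorial, descPochhammer_eval_eq_descFactorial,
      Nat.descFactorial_eq_factorial_mul_choose, nsmul_eq_mul]
    push_cast
    field_simp
  have hnewton := shift_eq_sum_fwdDiff_iter 1 (fun r : ℚ => r ^ k) n 0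
  simp only [zero_add, nsmul_one, hterm] at hnewton
  rw [hnewton, sum_subset (range_subset_range.mpr (by omega : n + 1 ≤ n + k + 1)),
    sum_subset (range_subset_range.mpr (by omega : k + 1 ≤ n + k + 1))]
  · intro i _ hi
    rw [stirlingSecond_eq_zero_of_lt (by simpa using hi), zero_mul]
  · intro i _ hi
    rw [descPochhammer_eval_coe_nat_of_lt (by simpa using hi), mul_zero]

theorem bernoulli_eq_sum_stirlingSecond_mul_derivative_descPochhammer (k : ℕ) :
    Polynomial.bernoulli k = ∑ i ∈ range (k + 1),
      C (stirlingSecond k i / ((i : ℚ) + 1)) * derivative (descPochhammer ℚ (i + 1)) := by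
  set G : ℚ[X] := ∑ i ∈ range (k + 1),
    C (stirlingSecond k i / ((i : ℚ) + 1)) * descPochhammer ℚ (i + 1) with hG_def
  have hG (n : ℕ) : G.eval ((n : ℚ) + 1) - G.eval (n : ℚ) = (n : ℚ) ^ k := by
    rw [natCast_pow_eq_sum_stirlingSecond_mul_descPochhammer, eval_finsetSum, eval_finsetSum,
      ← sum_sub_distrib]
    refine sum_congr rfl fun i _ => ?_
    simp only [eval_mul, eval_C]
    rw [← mul_sub, descPochhammer_eval_add_one_sub]
    field_simp
  have hB (n : ℕ) : (Polynomial.bernoulli (k + 1)).eval ((n : ℚ) + 1) -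
      (Polynomial.bernoulli (k + 1)).eval (n : ℚ) = ((k : ℚ) + 1) * (n : ℚ) ^ k := by
    rw [add_comm, bernoulli_eval_one_add]
    push_cast
    ring
  have hconst := eq_C_of_eval_natCast_add_one_eq
    (p := C ((k : ℚ) + 1) * G - Polynomial.bernoulli (k + 1)) fun n => by
      simp only [eval_sub, eval_mul, eval_C]
      linear_combination ((k : ℚ) + 1) * hG n - hB n
  have hderiv := congrArg derivative hconst
  rw [derivative_C, derivative_sub, derivative_C_mul, derivative_bernoulli_add_one, sub_eq_zero,
    show ((k : ℚ[X]) + 1) = C ((k : ℚ) + 1) by simp] at hderiv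
  rw [mul_left_cancel₀ (C_ne_zero.mpr (by positivity)) hderiv.symm, hG_def, derivative_sum]
  simp only [derivative_C_mul]

/-- `B_k(x) = Σ_{j=0}^{k} Σ_{i=j}^{k} ((j+1)/(i+1)) S_1(i+1,j+1) S_2(k,i) x^j`. -/
theorem bernoulli_poly_stirling (k : ℕ) (x : ℚ) :
    (Polynomial.bernoulli k).eval x =
      ∑ j ∈ Finset.range (k + 1), ∑ i ∈ Finset.Icc j k,
        ((j : ℚ) + 1) / ((i : ℚ) + 1) * stirlingFirst (i + 1) (j + 1) *
          stirlingSecond k i * x ^ j := by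
  rw [bernoulli_eq_sum_stirlingSecond_mul_derivative_descPochhammer, eval_finsetSum]
  calc _ = ∑ i ∈ range (k + 1), ∑ j ∈ range (i + 1),
        ((j : ℚ) + 1) / ((i : ℚ) + 1) * stirlingFirst (i + 1) (j + 1) *
          stirlingSecond k i * x ^ j := by
        refine sum_congr rfl fun i _ => ?_
        rw [eval_mul, eval_C,
          eval_derivative_eq_sum_range (descPochhammer_natDegree ℚ (i + 1)).le, mul_sum]
        refine sum_congr rfl fun j _ => ?_
        rw [stirlingFirst_eq_coeff_descPochhammer]
        ring
    _ = _ := sum_comm' fun i j => by simp only [mem_range, mem_Icc]; omega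
end

section
/- For all integers k, j with 0 ≤ j ≤ k, one has C(k, j) · B_{k-j} = (j+1) · Σ_{i=j}^{k} (1/(i+1)) · S_1(i+1, j+1) · S_2(k, i), where B_{k-j} is the (k−j)-th Bernoulli number, S_1 are the signed Stirling numbers of the first kind, and S_2 are the Stirling numbers of the second kind. -/
/-!
Newton's forward-difference formula, with `i! S₂(k,i) = Δⁱ[xᵏ](0)`, gives
`mᵏ = Σᵢ i! S₂(k,i) C(m,i)`; summing over `m < n` by the hockey-stick identity shows that
`P_k = Σᵢ S₂(k,i)/(i+1) · x(x-1)⋯(x-i)` satisfies `P_k(n) = Σ_{m<n} mᵏ`. By Faulhaber's formula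
`(k+1) P_k = B_{k+1}(x) - B_{k+1}`, and comparing the coefficients of `x^{j+1}` (Stirling numbers
of the first kind on the left, `C(k+1,j+1) B_{k-j}` on the right) gives the identity.
-/

open Finset
open Polynomial hiding bernoulli
open scoped Nat fwdDiff

theorem sum_range_choose_eq_choose_add_one (n i : ℕ) :
    ∑ m ∈ range n, m.choose i = n.choose (i + 1) := by
  induction n with
  | zero => simp
  | succ n ih => rw [sum_range_succ, ih, Nat.choose_succ_succ' n i, add_comm]

theorem factorial_mul_stirlingSecond (k i : ℕ) :
    (i ! : ℚ) * stirlingSecond k i = Δ_[1] ^[i] (fun r : ℚ ↦ r ^ k) 0 := by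
  rw [fwdDiff_iter_eq_sum_shift, stirlingSecond, ← mul_assoc, mul_one_div_cancel (by positivity),
    one_mul]
  exact sum_congr rfl fun l _ ↦ by simp

theorem pow_eq_sum_stirlingSecond_mul_choose (k m : ℕ) :
    (m : ℚ) ^ k = ∑ i ∈ range (k + 1), i ! * stirlingSecond k i * m.choose i := by
  let d (i : ℕ) : ℚ := m.choose i * Δ_[1] ^[i] (fun r : ℚ ↦ r ^ k) 0
  calc (m : ℚ) ^ k = ∑ i ∈ range (m + 1), d i := by
        simpa [d] using shift_eq_sum_fwdDiff_iter 1 (fun r : ℚ ↦ r ^ k) m 0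
    _ = ∑ i ∈ range (m + k + 1), d i :=
        sum_subset (range_subset_range.2 (by omega)) fun i _ hi ↦ by
          simp [d, Nat.choose_eq_zero_of_lt (by simp at hi; omega)]
    _ = ∑ i ∈ range (k + 1), d i :=
        (sum_subset (range_subset_range.2 (by omega)) fun i _ hi ↦ by
          simp [d, fwdDiff_iter_pow_eq_zero_of_lt (by simp at hi; omega)]).symm
    _ = _ := sum_congr rfl fun i _ ↦ by rw [factorial_mul_stirlingSecond]; ring

theorem sum_range_pow_eq_sum_stirlingSecond (k n : ℕ) :
    ∑ m ∈ range n, (m : ℚ) ^ k =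
      ∑ i ∈ range (k + 1), i ! * stirlingSecond k i * n.choose (i + 1) := by
  simp_rw [pow_eq_sum_stirlingSecond_mul_choose k, ← sum_range_choose_eq_choose_add_one n,
    Nat.cast_sum, mul_sum]
  exact sum_comm

noncomputable def powerSumPoly (k : ℕ) : ℚ[X] :=
  ∑ i ∈ range (k + 1), C (stirlingSecond k i / (i + 1)) * descPochhammer ℚ (i + 1)

theorem eval_powerSumPoly (k n : ℕ) :
    (powerSumPoly k).eval (n : ℚ) = ∑ m ∈ range n, (m : ℚ) ^ k := by
  rw [sum_range_pow_eq_sum_stirlingSecond, powerSumPoly, eval_finsetSum]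
  refine sum_congr rfl fun i _ ↦ ?_
  rw [eval_mul, eval_C, descPochhammer_eval_eq_descFactorial,
    Nat.descFactorial_eq_factorial_mul_choose, Nat.factorial_succ]
  push_cast
  field_simp

theorem C_mul_powerSumPoly (k : ℕ) :
    C ((k : ℚ) + 1) * powerSumPoly k = Polynomial.bernoulli (k + 1) - C (bernoulli (k + 1)) := by
  refine eq_of_infinite_eval_eq _ _ ((Set.infinite_range_of_injective Nat.cast_injective).mono ?_)
  rintro _ ⟨n, rfl⟩
  simp [eval_powerSumPoly, ← sum_range_pow_eq_bernoulli_sub]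

theorem coeff_descPochhammer (n j : ℕ) : (descPochhammer ℚ n).coeff j = stirlingFirst n j := by
  rw [stirlingFirst]
  congr 1
  induction n with
  | zero => simp
  | succ n ih => simp [descPochhammer_succ_right, ih, prod_range_succ]

theorem stirlingFirst_eq_zero_of_lt {n j : ℕ} (h : n < j) : stirlingFirst n j = 0 := by
  rw [← coeff_descPochhammer]
  exact coeff_eq_zero_of_natDegree_lt (by rwa [descPochhammer_natDegree])

theorem coeff_powerSumPoly (k j : ℕ) :
    (powerSumPoly k).coeff (j + 1) =
      ∑ i ∈ Icc j k, 1 / ((i : ℚ) + 1) * stirlingFirst (i + 1) (j + 1) * stirlingSecond k i := by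
  simp only [powerSumPoly, finsetSum_coeff, coeff_C_mul, coeff_descPochhammer]
  refine (sum_subset_zero_on_sdiff (fun i hi ↦ ?_) (fun i hi ↦ ?_) fun i _ ↦ by ring).symm
  · simp at hi ⊢; omega
  · rw [stirlingFirst_eq_zero_of_lt (by simp at hi; omega), mul_zero]

/-- for `0 ≤ j ≤ k`,
`C(k,j) B_{k-j} = (j+1) Σ_{i=j}^{k} (1/(i+1)) S_1(i+1,j+1) S_2(k,i)`. -/
theorem choose_mul_bernoulli_eq (k j : ℕ) (hjk : j ≤ k) :
    (Nat.choose k j : ℚ) * bernoulli (k - j) =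
      ((j : ℚ) + 1) *
        ∑ i ∈ Finset.Icc j k,
          1 / ((i : ℚ) + 1) * stirlingFirst (i + 1) (j + 1) * stirlingSecond k i := by
  have hcoeff := congrArg (coeff · (j + 1)) (C_mul_powerSumPoly k)
  simp only [coeff_C_mul, coeff_powerSumPoly, coeff_sub, coeff_bernoulli, coeff_C] at hcoeff
  rw [if_pos (by omega), if_neg (by omega), sub_zero, Nat.add_sub_add_right] at hcoeff
  have hchoose : ((k : ℚ) + 1) * k.choose j = (k + 1).choose (j + 1) * (j + 1) := by
    exact_mod_cast Nat.add_one_mul_choose_eq k j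
  refine mul_left_cancel₀ (by positivity : (k : ℚ) + 1 ≠ 0) ?_
  linear_combination bernoulli (k - j) * hchoose - (j + 1) * hcoeff
end

section
/- For all integers r ≥ 0 and k ≥ 0, one has B_k(r) = Σ_{j=0}^{k} (-1)^j · (j!/(j+1)) · S_{2,r}(k+r, j+r), where B_k(x) is the k-th Bernoulli polynomial and S_{2,r}(k+r, j+r) = (1/j!) Σ_{i=0}^{j} (-1)^{j-i} C(j,i) (i + r)^k are the r-Stirling numbers of the second kind. -/
/-!
Write `Δ` for the forward difference with step `1`. Since `j! S_{2,r}(k+r, j+r) = Δʲ[yᵏ](r)`,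
the claim is `B_k = ∑_{j ≤ k} (-1)ʲ/(j+1) Δʲ[yᵏ]`, i.e. `B_k = (log(1 + Δ)/Δ) yᵏ`.
The heart is `log(1 + Δ) = d/dy` on polynomials: if `deg P ≤ n` then
`P' = ∑_{m < n} (-1)ᵐ/(m+1) Δᵐ⁺¹P`. Applied to `P = B_{k+1}`, for which `ΔB_{k+1} = (k+1) yᵏ`
and `B'_{k+1} = (k+1) B_k`, this gives the formula.
-/

/-- The `r`-Stirling numbers of the second kind (shifted indexing):
`S_{2,r}(k+r, j+r) = (1/j!) Σ_{i=0}^{j} (-1)^{j-i} C(j,i) (i + r)^k`,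
here recorded as a function of `r`, `k` and `j`. -/
def rStirlingSecond (r k j : ℕ) : ℚ :=
  (1 / (Nat.factorial j : ℚ)) *
    ∑ i ∈ Finset.range (j + 1),
      (-1 : ℚ) ^ (j - i) * (Nat.choose j i : ℚ) * ((i : ℚ) + r) ^ k

open Finset Polynomial fwdDiff
open scoped Nat

section ForwardDifference

variable {R : Type*} [CommRing R]

theorem fwdDiff_iter_succ_mul_apply_zero (g : R → R) (m : ℕ) :
    Δ_[1] ^[m + 1] (fun y ↦ y * g y) 0 = (m + 1) * Δ_[1] ^[m] g 1 := by
  simp only [fwdDiff_iter_eq_sum_shift, zero_add, nsmul_eq_mul, mul_one, zsmul_eq_mul]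
  rw [sum_range_succ', mul_sum]
  simp only [Nat.cast_zero, zero_mul, mul_zero, add_zero]
  refine sum_congr rfl fun l _ ↦ ?_
  have hchoose : ((m + 1).choose (l + 1) : R) * (l + 1) = (m + 1) * m.choose l := by
    exact_mod_cast congrArg (Nat.cast (R := R)) (Nat.add_one_mul_choose_eq m l).symm
  rw [Nat.add_sub_add_right, add_comm 1]
  push_cast
  linear_combination (-1 : R) ^ (m - l) * g (l + 1) * hchoose

theorem sum_neg_one_pow_mul_fwdDiff_iter_apply_one (g : R → R) (n : ℕ) :
    ∑ m ∈ range n, (-1) ^ m * Δ_[1] ^[m] g 1 = g 0 - (-1) ^ n * Δ_[1] ^[n] g 0 := by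
  have step (m : ℕ) : (-1 : R) ^ m * Δ_[1] ^[m] g 1 =
      (-1) ^ m * Δ_[1] ^[m] g 0 - (-1) ^ (m + 1) * Δ_[1] ^[m + 1] g 0 := by
    rw [Function.iterate_succ_apply', fwdDiff, zero_add, pow_succ]
    ring
  rw [sum_congr rfl fun m _ ↦ step m, sum_range_sub']
  simp

end ForwardDifference

section LogOfShift

variable {K : Type*} [Field K] [CharZero K]

/- Writing `P = P(0) + y * g` with `g = divX P`, `fwdDiff_iter_succ_mul_apply_zero` turns the
series into the telescoping sum of `sum_neg_one_pow_mul_fwdDiff_iter_apply_one`, which leaves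
`g(0) = P'(0)`. -/
theorem Polynomial.eval_derivative_zero_eq_sum_fwdDiff_iter {P : K[X]} {n : ℕ}
    (hP : P.natDegree ≤ n) :
    P.derivative.eval 0 = ∑ m ∈ range n, (-1) ^ m / (m + 1) * Δ_[1] ^[m + 1] P.eval 0 := by
  have hsplit : P.eval = (fun y ↦ y * P.divX.eval y) + (C (P.coeff 0)).eval := by
    funext y
    nth_rw 1 [← X_mul_divX_add P]
    simp only [eval_add, eval_mul, eval_X, eval_C, Pi.add_apply]
  have hdivX : (-1 : K) ^ n * Δ_[1] ^[n] P.divX.eval 0 = 0 := by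
    cases n with
    | zero =>
      simp [← coeff_zero_eq_eval_zero, coeff_divX,
        coeff_eq_zero_of_natDegree_lt (hP.trans_lt one_pos)]
    | succ n =>
      rw [fwdDiff_iter_eq_zero_of_degree_lt (by rw [natDegree_divX_eq_natDegree_tsub_one]; omega)]
      simp
  have hterm (m : ℕ) : (-1 : K) ^ m / (m + 1) * Δ_[1] ^[m + 1] P.eval 0 =
      (-1) ^ m * Δ_[1] ^[m] P.divX.eval 1 := by
    rw [hsplit, fwdDiff_iter_add, fwdDiff_iter_eq_zero_of_degree_lt (by simp),
      Pi.add_apply, fwdDiff_iter_succ_mul_apply_zero]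
    field_simp
    simp
  rw [sum_congr rfl fun m _ ↦ hterm m, sum_neg_one_pow_mul_fwdDiff_iter_apply_one, hdivX,
    sub_zero, ← coeff_zero_eq_eval_zero, ← coeff_zero_eq_eval_zero, coeff_derivative, coeff_divX]
  simp

theorem Polynomial.eval_derivative_eq_sum_fwdDiff_iter {P : K[X]} {n : ℕ}
    (hP : P.natDegree ≤ n) (x : K) :
    P.derivative.eval x = ∑ m ∈ range n, (-1) ^ m / (m + 1) * Δ_[1] ^[m + 1] P.eval x := by
  have hshift : (P.comp (X + C x)).natDegree ≤ n :=
    natDegree_comp_le.trans (by rw [natDegree_X_add_C, mul_one]; exact hP)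
  have hzero := eval_derivative_zero_eq_sum_fwdDiff_iter hshift
  simp only [derivative_comp, eval_comp, eval_add, eval_X, eval_C, zero_add,
    derivative_add, derivative_X, derivative_C, add_zero, one_mul] at hzero
  rw [hzero]
  refine sum_congr rfl fun m _ ↦ ?_
  have htranslate := fwdDiff_iter_comp_add (1 : K) (fun y ↦ P.eval y) x (m + 1) 0
  rw [zero_add] at htranslate
  rw [htranslate]

end LogOfShift

theorem Polynomial.natDegree_bernoulli_le (n : ℕ) : (bernoulli n).natDegree ≤ n := by
  rw [bernoulli_def]
  exact natDegree_sum_le_of_forall_le _ _ fun i hi ↦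
    (natDegree_monomial_le _).trans (mem_range_succ_iff.mp hi)

theorem Polynomial.fwdDiff_eval_bernoulli_succ (k : ℕ) :
    Δ_[1] (bernoulli (k + 1)).eval = fun y : ℚ ↦ (k + 1) * y ^ k := by
  funext y
  rw [fwdDiff, add_comm, bernoulli_eval_one_add]
  push_cast
  ring

theorem Polynomial.bernoulli_eval_eq_sum_fwdDiff_iter_pow (k : ℕ) (x : ℚ) :
    (bernoulli k).eval x =
      ∑ j ∈ range (k + 1), (-1) ^ j / (j + 1) * Δ_[1] ^[j] (fun y ↦ y ^ k) x := by
  have h := eval_derivative_eq_sum_fwdDiff_iter (natDegree_bernoulli_le (k + 1)) x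
  have hsmul (j : ℕ) : Δ_[1] ^[j] (fun y : ℚ ↦ (k + 1) * y ^ k) x =
      (k + 1) * Δ_[1] ^[j] (fun y ↦ y ^ k) x :=
    congrFun (fwdDiff_iter_const_smul 1 ((k : ℚ) + 1) (fun y : ℚ ↦ y ^ k) j) x
  simp only [derivative_bernoulli_add_one, eval_mul, eval_add, eval_natCast, eval_one,
    Function.iterate_succ_apply, fwdDiff_eval_bernoulli_succ, hsmul] at h
  apply mul_left_cancel₀ (by positivity : (k + 1 : ℚ) ≠ 0)
  rw [h, mul_sum]
  exact sum_congr rfl fun j _ ↦ by ring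

theorem rStirlingSecond_eq_fwdDiff_iter_pow_div_factorial (r k j : ℕ) :
    rStirlingSecond r k j = Δ_[1] ^[j] (fun y : ℚ ↦ y ^ k) r / j ! := by
  rw [rStirlingSecond, fwdDiff_iter_eq_sum_shift, one_div_mul_eq_div]
  congr 1
  refine sum_congr rfl fun i _ ↦ ?_
  simp [add_comm]

/-- `B_k(r) = Σ_{j=0}^{k} (-1)^j (j!/(j+1)) S_{2,r}(k+r, j+r)`. -/
theorem bernoulli_poly_eval_nat_eq_rStirling (r k : ℕ) :
    (Polynomial.bernoulli k).eval (r : ℚ) =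
      ∑ j ∈ Finset.range (k + 1),
        (-1 : ℚ) ^ j * ((Nat.factorial j : ℚ) / (j + 1)) * rStirlingSecond r k j := by
  rw [bernoulli_eval_eq_sum_fwdDiff_iter_pow]
  refine sum_congr rfl fun j _ ↦ ?_
  rw [rStirlingSecond_eq_fwdDiff_iter_pow_div_factorial]
  field_simp
end

section
/- For all integers m ≥ 1, r ≥ 0, k ≥ 0, and n ≥ 1, the power sum S_k^{m,r}(n) = Σ_{ℓ=0}^{n-1} (ℓm + r)^k satisfies S_k^{m,r}(n) = Σ_{j=0}^{k} A_{m,r}(k, k−j) · C(n+j, k+1), where A_{m,r}(k,j) = Σ_{i=0}^{j} (-1)^i · C(k+1, i) · (m(j−i) + r)^k and C(a,b) denotes the ordinary binomial coefficient. -/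
/-!
Put `f t = (m t + r)^k`. The coefficients of `(1 - X)^(k+1) · ∑ f(t) Xᵗ` are the numbers
`A_{m,r}(k, s)`, and for `s > k` they are `(k+1)`-st forward differences of the degree-`k`
polynomial `f`, hence zero. Dividing by `(1 - X)^(k+1) = (∑ C(n+k, k) Xⁿ)⁻¹` and comparing
coefficients gives `f ℓ = ∑_j A(k - j) C(ℓ + j, k)`, and summing over `ℓ < n` with the
hockey-stick identity gives the theorem.
-/

/-- `A_{m,r}(k,j) = Σ_{i=0}^{j} (-1)^i C(k+1,i) (m(j-i) + r)^k`. -/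
def eulerianA (m r k j : ℕ) : ℚ :=
  ∑ i ∈ Finset.range (j + 1),
    (-1 : ℚ) ^ i * (Nat.choose (k + 1) i : ℚ) * ((m : ℚ) * ((j - i : ℕ) : ℚ) + r) ^ k

open Finset PowerSeries fwdDiff

theorem Nat.sum_range_add_choose_of_le {j k : ℕ} (hj : j ≤ k) (n : ℕ) :
    ∑ ℓ ∈ range n, (ℓ + j).choose k = (n + j).choose (k + 1) := by
  induction n with
  | zero => simp [Nat.choose_eq_zero_of_lt (Nat.lt_succ_of_le hj)]
  | succ n ih => rw [sum_range_succ, ih, add_right_comm, Nat.choose_succ_succ', add_comm]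

section

variable {R : Type*} [CommRing R]

theorem PowerSeries.coeff_one_sub_X_pow (n i : ℕ) :
    coeff i ((1 - X : R⟦X⟧) ^ n) = (-1) ^ i * n.choose i := by
  have : (1 - X : R⟦X⟧) ^ n = rescale (-1) (((1 + Polynomial.X) ^ n : Polynomial R) : R⟦X⟧) := by
    simp [map_pow, sub_eq_add_neg]
  rw [this, coeff_rescale, Polynomial.coeff_coe, Polynomial.coeff_one_add_X_pow]

theorem PowerSeries.X_pow_mul_mk_add_choose {s k : ℕ} (hs : s ≤ k) :
    X ^ s * PowerSeries.mk (fun n ↦ ((k + n).choose k : R)) =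
      PowerSeries.mk fun ℓ ↦ ((ℓ + (k - s)).choose k : R) := by
  ext ℓ
  rw [coeff_X_pow_mul', coeff_mk, coeff_mk]
  split_ifs with h
  · congr 2
    omega
  · rw [Nat.choose_eq_zero_of_lt (by omega), Nat.cast_zero]

theorem Polynomial.fwdDiff_iter_eval_natCast_eq_zero {p : Polynomial R} {n : ℕ}
    (hp : p.natDegree < n) : Δ_[1] ^[n] (fun t : ℕ ↦ p.eval (t : R)) = 0 := by
  ext y
  simpa [fwdDiff_iter_eq_sum_shift] using congr_fun (fwdDiff_iter_eq_zero_of_degree_lt hp) (y : R)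

def eulerianCoeff (f : ℕ → R) (k s : ℕ) : R :=
  ∑ i ∈ range (s + 1), (-1) ^ i * (k + 1).choose i * f (s - i)

theorem coeff_one_sub_X_pow_mul_mk (f : ℕ → R) (k s : ℕ) :
    coeff s ((1 - X) ^ (k + 1) * PowerSeries.mk f) = eulerianCoeff f k s := by
  rw [coeff_mul, Finset.Nat.sum_antidiagonal_eq_sum_range_succ
    (fun i j ↦ coeff i ((1 - X : R⟦X⟧) ^ (k + 1)) * coeff j (PowerSeries.mk f))]
  simp [coeff_one_sub_X_pow, eulerianCoeff]

theorem eulerianCoeff_add_eq_fwdDiff_iter (f : ℕ → R) (k y : ℕ) :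
    eulerianCoeff f k (y + (k + 1)) = Δ_[1] ^[k + 1] f y := by
  rw [eulerianCoeff, fwdDiff_iter_eq_sum_shift, show y + (k + 1) + 1 = k + 1 + 1 + y by omega,
    sum_range_add, ← sum_range_reflect,
    sum_eq_zero (s := range y) fun i _ ↦ by rw [Nat.choose_eq_zero_of_lt (by omega)]; simp,
    add_zero]
  refine sum_congr rfl fun i hi ↦ ?_
  have hi : i ≤ k + 1 := mem_range_succ_iff.mp hi
  rw [show k + 1 + 1 - 1 - i = k + 1 - i by omega, Nat.choose_symm hi,
    show y + (k + 1) - (k + 1 - i) = y + i by omega, smul_eq_mul, mul_one, zsmul_eq_mul]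
  push_cast
  ring

variable {f : ℕ → R} {k : ℕ}

theorem one_sub_X_pow_mul_mk_eq_sum (hf : Δ_[1] ^[k + 1] f = 0) :
    (1 - X) ^ (k + 1) * PowerSeries.mk f =
      ∑ s ∈ range (k + 1), C (eulerianCoeff f k s) * X ^ s := by
  ext s
  simp only [coeff_one_sub_X_pow_mul_mk, map_sum, coeff_C_mul_X_pow, sum_ite_eq, mem_range]
  split_ifs with hs
  · rfl
  · obtain ⟨y, rfl⟩ : ∃ y, s = y + (k + 1) := ⟨s - (k + 1), by omega⟩
    rw [eulerianCoeff_add_eq_fwdDiff_iter, hf, Pi.zero_apply]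

theorem eq_sum_eulerianCoeff_mul_choose (hf : Δ_[1] ^[k + 1] f = 0) (ℓ : ℕ) :
    f ℓ = ∑ j ∈ range (k + 1), eulerianCoeff f k (k - j) * (ℓ + j).choose k := by
  calc f ℓ = coeff ℓ (PowerSeries.mk (fun n ↦ ((k + n).choose k : R)) *
        ((1 - X) ^ (k + 1) * PowerSeries.mk f)) := by
        rw [← mul_assoc, mk_add_choose_mul_one_sub_pow_eq_one, one_mul, coeff_mk]
    _ = ∑ s ∈ range (k + 1), eulerianCoeff f k s * (ℓ + (k - s)).choose k := by
        rw [one_sub_X_pow_mul_mk_eq_sum hf, mul_sum, map_sum]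
        refine sum_congr rfl fun s hs ↦ ?_
        rw [mul_left_comm, coeff_C_mul, mul_comm (PowerSeries.mk _),
          X_pow_mul_mk_add_choose (mem_range_succ_iff.mp hs), coeff_mk]
    _ = ∑ j ∈ range (k + 1), eulerianCoeff f k (k - j) * (ℓ + j).choose k := by
        rw [← sum_range_reflect]
        refine sum_congr rfl fun j hj ↦ ?_
        rw [show k - (k + 1 - 1 - j) = j by have := mem_range.mp hj; omega, Nat.add_sub_cancel]

theorem sum_range_eq_sum_eulerianCoeff_mul_choose (hf : Δ_[1] ^[k + 1] f = 0) (n : ℕ) :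
    ∑ ℓ ∈ range n, f ℓ =
      ∑ j ∈ range (k + 1), eulerianCoeff f k (k - j) * (n + j).choose (k + 1) := by
  simp_rw [eq_sum_eulerianCoeff_mul_choose hf _]
  rw [sum_comm]
  refine sum_congr rfl fun j hj ↦ ?_
  rw [← mul_sum, ← Nat.cast_sum, Nat.sum_range_add_choose_of_le (mem_range_succ_iff.mp hj)]

end

theorem eulerianA_eq_eulerianCoeff (m r k : ℕ) :
    eulerianA m r k = eulerianCoeff (fun t : ℕ ↦ ((m : ℚ) * t + r) ^ k) k :=
  rfl

theorem power_sum_eq_eulerian_binomial_general (m r k n : ℕ) :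
    ∑ ℓ ∈ Finset.range n, ((ℓ : ℚ) * m + r) ^ k =
      ∑ j ∈ Finset.range (k + 1),
        eulerianA m r k (k - j) * (Nat.choose (n + j) (k + 1) : ℚ) := by
  let p : Polynomial ℚ := (Polynomial.C (m : ℚ) * Polynomial.X + Polynomial.C (r : ℚ)) ^ k
  have hp : p.natDegree < k + 1 := Nat.lt_succ_of_le <|
    (Polynomial.natDegree_pow_le_of_le k Polynomial.natDegree_linear_le).trans_eq (mul_one k)
  have hf : Δ_[1] ^[k + 1] (fun t : ℕ ↦ ((m : ℚ) * t + r) ^ k) = 0 := by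
    simpa [p] using Polynomial.fwdDiff_iter_eval_natCast_eq_zero hp
  simp_rw [eulerianA_eq_eulerianCoeff, ← sum_range_eq_sum_eulerianCoeff_mul_choose hf n]
  exact sum_congr rfl fun ℓ _ ↦ by ring

/-- `S_k^{m,r}(n) = Σ_{j=0}^{k} A_{m,r}(k, k-j) C(n+j, k+1)`. -/
theorem power_sum_eq_eulerian_binomial (m r k n : ℕ) (hm : 1 ≤ m) (hn : 1 ≤ n) :
    ∑ ℓ ∈ Finset.range n, ((ℓ : ℚ) * m + r) ^ k =
      ∑ j ∈ Finset.range (k + 1),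
        eulerianA m r k (k - j) * (Nat.choose (n + j) (k + 1) : ℚ) :=
  power_sum_eq_eulerian_binomial_general m r k n
end
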